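/- Let H₀ and V be bounded linear operators on a Banach space and p ≥ 2 a natural number. Then s ↦ (H₀+sV)^p is twice differentiable in operator norm and its second derivative at s=t equals 2 · Σ_{p₀+p₁+p₂=p−2, pᵢ≥0} (H₀+tV)^{p₀} V (H₀+tV)^{p₁} V (H₀+tV)^{p₂}. -/

import Mathlib

/-!
Along a path `γ` with constant derivative `v`, the noncommutative Leibniz rule gives
`(γ ^ n)' = ∑_{i < n} γ ^ i * v * γ ^ (n - 1 - i)`. Differentiating once more, each term yields a
sum in which the new `v` sits to the left of the old one and a sum in which it sits to the right;
each of these two families runs exactly once over the triples `a + b + c = n - 2`, whence the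
factor `2`.
-/

open Finset

section Triples

variable {M : Type*} [AddCommMonoid M]

/-- `∑_{a + b + c = n - 2} X a b c`; empty for `n < 2`. -/
def sumTriples (n : ℕ) (X : ℕ → ℕ → ℕ → M) : M :=
  ∑ a ∈ range (n - 1), ∑ b ∈ range (n - 1 - a), X a b (n - 2 - a - b)

theorem sumTriples_eq_sum_range_first (n : ℕ) (X : ℕ → ℕ → ℕ → M) :
    sumTriples n X = ∑ i ∈ range n, ∑ b ∈ range (n - 1 - i), X i b (n - 2 - i - b) := by
  cases n with
  | zero => simp [sumTriples]
  | succ n => simp [sumTriples, sum_range_succ]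

theorem sumTriples_eq_sum_range_last (n : ℕ) (X : ℕ → ℕ → ℕ → M) :
    sumTriples n X = ∑ i ∈ range n, ∑ a ∈ range i, X a (i - 1 - a) (n - 1 - i) := by
  rw [sumTriples, eq_comm, sum_comm' (t' := range (n - 1)) (s' := fun a => Ico (a + 1) n)]
  · refine sum_congr rfl fun a _ => ?_
    rw [sum_Ico_eq_sum_range, show n - (a + 1) = n - 1 - a by omega]
    refine sum_congr rfl fun b _ => ?_
    rw [show a + 1 + b - 1 - a = b by omega, show n - 1 - (a + 1 + b) = n - 2 - a - b by omega]
  · intro i a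
    simp only [mem_range, mem_Ico]
    omega

end Triples

section Derivatives

variable {𝕜 𝔸 : Type*} [NontriviallyNormedField 𝕜] [NormedRing 𝔸] [NormedAlgebra 𝕜 𝔸]
  {f : 𝕜 → 𝔸} {f' : 𝔸} {x : 𝕜}

theorem HasDerivAt.fun_pow_sum_range (h : HasDerivAt f f' x) (n : ℕ) :
    HasDerivAt (fun y => f y ^ n) (∑ i ∈ range n, f x ^ i * f' * f x ^ (n - 1 - i)) x := by
  convert h.fun_pow' n using 1
  rw [← sum_range_reflect]
  refine sum_congr rfl fun i hi => ?_
  rw [Nat.pred_eq_sub_one, Nat.sub_sub_self (Nat.le_sub_one_of_lt (mem_range.mp hi))]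

theorem HasDerivAt.fun_pow_mul_const_mul_pow (h : HasDerivAt f f' x) (c : 𝔸) (i j : ℕ) :
    HasDerivAt (fun y => f y ^ i * c * f y ^ j)
      ((∑ a ∈ range i, f x ^ a * f' * f x ^ (i - 1 - a)) * c * f x ^ j
        + f x ^ i * c * ∑ b ∈ range j, f x ^ b * f' * f x ^ (j - 1 - b)) x :=
  ((h.fun_pow_sum_range i).mul_const c).mul (h.fun_pow_sum_range j)

theorem hasDerivAt_deriv_pow_of_forall_hasDerivAt {v : 𝔸} (hf : ∀ y, HasDerivAt f v y)
    (n : ℕ) (x : 𝕜) :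
    HasDerivAt (deriv fun y => f y ^ n)
      (2 • sumTriples n fun a b c => f x ^ a * v * f x ^ b * v * f x ^ c) x := by
  have hderiv :
      deriv (fun y => f y ^ n) = fun y => ∑ i ∈ range n, f y ^ i * v * f y ^ (n - 1 - i) :=
    funext fun y => ((hf y).fun_pow_sum_range n).deriv
  rw [hderiv, two_smul]
  nth_rw 1 [sumTriples_eq_sum_range_last]
  rw [sumTriples_eq_sum_range_first, ← sum_add_distrib]
  refine HasDerivAt.fun_sum fun i _ => ?_
  refine ((hf x).fun_pow_mul_const_mul_pow v i (n - 1 - i)).congr_deriv ?_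
  rw [sum_mul, sum_mul, mul_sum]
  congr 1
  refine sum_congr rfl fun b _ => ?_
  rw [show n - 1 - i - 1 - b = n - 2 - i - b by omega]
  simp only [mul_assoc]

end Derivatives

theorem hasDerivAt_deriv_pow_linear_path_general {E : Type*} [NormedAddCommGroup E] [NormedSpace ℂ E]
    (H₀ V : E →L[ℂ] E) (p : ℕ) (t : ℝ) :
    HasDerivAt (deriv (fun s : ℝ => (H₀ + s • V) ^ p))
      (2 • ∑ p₀ ∈ Finset.range (p - 1), ∑ p₁ ∈ Finset.range (p - 1 - p₀),
        (H₀ + t • V) ^ p₀ * V * (H₀ + t • V) ^ p₁ * V * (H₀ + t • V) ^ (p - 2 - p₀ - p₁)) t := by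
  have hpath (s : ℝ) : HasDerivAt (fun u : ℝ => H₀ + u • V) V s := by
    simpa using ((hasDerivAt_id s).smul_const V).const_add H₀
  exact hasDerivAt_deriv_pow_of_forall_hasDerivAt hpath p t

/-- For bounded operators `H₀, V` on a complex Banach space and `p ≥ 2`, the map
`s ↦ (H₀+sV)^p` is twice differentiable in operator norm, with second derivative at `s = t`
equal to `2 Σ_{p₀+p₁+p₂=p−2} (H₀+tV)^{p₀} V (H₀+tV)^{p₁} V (H₀+tV)^{p₂}`. -/
theorem hasDerivAt_deriv_pow_linear_path {E : Type*} [NormedAddCommGroup E] [NormedSpace ℂ E]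
    (H₀ V : E →L[ℂ] E) (p : ℕ) (hp : 2 ≤ p) (t : ℝ) :
    HasDerivAt (deriv (fun s : ℝ => (H₀ + s • V) ^ p))
      (2 • ∑ p₀ ∈ Finset.range (p - 1), ∑ p₁ ∈ Finset.range (p - 1 - p₀),
        (H₀ + t • V) ^ p₀ * V * (H₀ + t • V) ^ p₁ * V * (H₀ + t • V) ^ (p - 2 - p₀ - p₁)) t :=
  hasDerivAt_deriv_pow_linear_path_general H₀ V p t
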